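/- arXiv:2004.02445 — 4 statements merged into one kernel-verified Lean document; each statement's English description precedes it below -/
import Mathlib

section
/- Let m > 2 be a real number and let C be a real number with 0 < C ≤ min(1, m − 1 − 2/m). Then for every real a ≥ 1 + m/(m−2) and every real q ≥ 0 the following hold: (i) a − q² + (m−1) q^m ≥ 1 + C q^m; (ii) (1 + 2m/C) (a − q² + (m−1) q^m) ≥ 2q + m q^{m−1}. -/
open Set Filter Topology Metric

noncomputable section

abbrev Spc (N : ℕ) := EuclideanSpace ℝ (Fin N)

/-- Spatial Laplacian of a function of space and time. -/
def pLap (N : ℕ) (φ : Spc N × ℝ → ℝ) (p : Spc N × ℝ) : ℝ :=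
  ∑ i : Fin N,
    iteratedFDeriv ℝ 2 (fun x => φ (x, p.2)) p.1
      ![EuclideanSpace.single i (1:ℝ), EuclideanSpace.single i (1:ℝ)]

/-- Spatial gradient of a function of space and time. -/
def pGrad (N : ℕ) (φ : Spc N × ℝ → ℝ) (p : Spc N × ℝ) : Spc N :=
  gradient (fun x => φ (x, p.2)) p.1

/-- Time derivative of a function of space and time. -/
def pT (N : ℕ) (φ : Spc N × ℝ → ℝ) (p : Spc N × ℝ) : ℝ :=
  deriv (fun t => φ (p.1, t)) p.2

/-- Viscosity subsolution of `u_t - Δu + |Du|^m = h(x)` in `O` (local maxima relative to `O`). -/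
def IsParabolicSubsolution (N : ℕ) (m : ℝ) (h : Spc N → ℝ) (O : Set (Spc N × ℝ))
    (u : Spc N × ℝ → ℝ) : Prop :=
  ∀ p ∈ O, ∀ φ : Spc N × ℝ → ℝ, ContDiffAt ℝ 2 φ p →
    IsLocalMaxOn (fun q => u q - φ q) O p →
    pT N φ p - pLap N φ p + ‖pGrad N φ p‖ ^ m ≤ h p.1

/-- Viscosity supersolution of `u_t - Δu + |Du|^m = h(x)` in `O` (local minima relative to `O`). -/
def IsParabolicSupersolution (N : ℕ) (m : ℝ) (h : Spc N → ℝ) (O : Set (Spc N × ℝ))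
    (u : Spc N × ℝ → ℝ) : Prop :=
  ∀ p ∈ O, ∀ φ : Spc N × ℝ → ℝ, ContDiffAt ℝ 2 φ p →
    IsLocalMinOn (fun q => u q - φ q) O p →
    h p.1 ≤ pT N φ p - pLap N φ p + ‖pGrad N φ p‖ ^ m

/-- Continuous, bounded-from-below viscosity solution of the Cauchy problem on ℝ^N × [0,∞). -/
def IsSolutionWholeSpace (N : ℕ) (m : ℝ) (f u₀ : Spc N → ℝ) (u : Spc N × ℝ → ℝ) : Prop :=
  ContinuousOn u (univ ×ˢ Ici 0) ∧ BddBelow (u '' (univ ×ˢ Ici 0)) ∧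
  IsParabolicSubsolution N m f (univ ×ˢ Ioi 0) u ∧
  IsParabolicSupersolution N m f (univ ×ˢ Ioi 0) u ∧
  ∀ x, u (x, 0) = u₀ x

/-- Laplacian of a stationary function. -/
def eLap (N : ℕ) (φ : Spc N → ℝ) (x : Spc N) : ℝ :=
  ∑ i : Fin N,
    iteratedFDeriv ℝ 2 φ x ![EuclideanSpace.single i (1:ℝ), EuclideanSpace.single i (1:ℝ)]

/-- Classical solution of the ergodic problem `λ - Δφ + |Dφ|^m = f`. -/
def IsErgodicSolution (N : ℕ) (m : ℝ) (f : Spc N → ℝ) (lam : ℝ) (φ : Spc N → ℝ) : Prop :=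
  ContDiff ℝ 2 φ ∧ ∀ x, lam - eLap N φ x + ‖gradient φ x‖ ^ m = f x

/-- Hypothesis (H1) with explicit data `g, α, g₀, f₀`. -/
def H1data (N : ℕ) (f : Spc N → ℝ) (g : ℝ → ℝ) (α g₀ f₀ : ℝ) : Prop :=
  0 < α ∧ 0 < g₀ ∧ 0 < f₀ ∧ MonotoneOn g (Ici 0) ∧ (∀ r ∈ Ici (0:ℝ), 0 ≤ g r) ∧
  (∀ r : ℝ, 0 ≤ r → g₀⁻¹ * r ^ α ≤ g r) ∧
  (∀ x : Spc N, f₀⁻¹ * g ‖x‖ - f₀ ≤ f x ∧ f x ≤ f₀ * (g ‖x‖ + 1))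

/-- Hypothesis (H1). -/
def H1 (N : ℕ) (f : Spc N → ℝ) : Prop :=
  ∃ g α g₀ f₀, H1data N f g α g₀ f₀

/-- The parabolic topology on ℝ^N × ℝ. -/
def parTop (N : ℕ) : TopologicalSpace (Spc N × ℝ) :=
  TopologicalSpace.generateFrom
    { S | ∃ (x : Spc N) (t r : ℝ), 0 < r ∧ S = Metric.ball x r ×ˢ Set.Ioc (t - r) t }

/-- Parabolically open sets. -/
def ParabolicallyOpen (N : ℕ) (Q : Set (Spc N × ℝ)) : Prop := (parTop N).IsOpen Q

/-- Parabolic closure. -/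
def pClosure (N : ℕ) (Q : Set (Spc N × ℝ)) : Set (Spc N × ℝ) := @closure _ (parTop N) Q

/-- Parabolic boundary. -/
def pFrontier (N : ℕ) (Q : Set (Spc N × ℝ)) : Set (Spc N × ℝ) := @frontier _ (parTop N) Q

/-
Weighted AM–GM with weights `2/m` and `1 - 2/m` gives `q² ≤ (2/m) q^m + (m-2)/m`, so the
left-hand side of (i) is at least `a - (m-2)/m + (m - 1 - 2/m) q^m ≥ 1 + C q^m`. For (ii), both
`q` and `q^{m-1}` are at most `1 + q^m`, hence `2q + m q^{m-1} ≤ 2m (1 + q^m)`, which is bounded by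
`(1 + 2m/C)(1 + C q^m)` because `C ≤ 1`; now multiply (i) by `1 + 2m/C`.
-/

theorem Real.rpow_le_div_mul_rpow_add {q r m : ℝ} (hq : 0 ≤ q) (hr : 0 < r) (hrm : r ≤ m) :
    q ^ r ≤ r / m * q ^ m + (m - r) / m := by
  have hm : 0 < m := hr.trans_le hrm
  have amgm := Real.geom_mean_le_arith_mean2_weighted (div_nonneg hr.le hm.le)
    (div_nonneg (sub_nonneg.mpr hrm) hm.le) (Real.rpow_nonneg hq m) zero_le_one
    (by field_simp; ring)
  rwa [← Real.rpow_mul hq, mul_div_cancel₀ r hm.ne', Real.one_rpow, mul_one, mul_one] at amgm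

theorem Real.rpow_le_one_add_rpow {q s m : ℝ} (hq : 0 ≤ q) (hs : 0 ≤ s) (hsm : s ≤ m) :
    q ^ s ≤ 1 + q ^ m := by
  rcases le_total q 1 with hq1 | hq1
  · linarith [Real.rpow_le_one hq hq1 hs, Real.rpow_nonneg hq m]
  · linarith [Real.rpow_le_rpow_of_exponent_le hq1 hsm]

theorem one_add_mul_rpow_le {m C a q : ℝ} (hm : 2 < m) (hC : C ≤ m - 1 - 2 / m)
    (ha : 1 + m / (m - 2) ≤ a) (hq : 0 ≤ q) :
    1 + C * q ^ m ≤ a - q ^ (2:ℝ) + (m - 1) * q ^ m := by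
  have hm0 : 0 < m := by linarith
  have young := Real.rpow_le_div_mul_rpow_add hq two_pos hm.le
  have hsmall : (m - 2) / m ≤ m / (m - 2) := by
    rw [div_le_div_iff₀ hm0 (by linarith)]
    nlinarith
  nlinarith [Real.rpow_nonneg hq m]

theorem add_mul_rpow_sub_one_le {m C q E : ℝ} (hm : 2 ≤ m) (hC : 0 < C) (hC1 : C ≤ 1)
    (hq : 0 ≤ q) (hE : 1 + C * q ^ m ≤ E) :
    2 * q + m * q ^ (m - 1) ≤ (1 + 2 * m / C) * E := by
  have hq1 : q ≤ 1 + q ^ m := by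
    simpa using Real.rpow_le_one_add_rpow hq zero_le_one (by linarith)
  have hqm1 : q ^ (m - 1) ≤ 1 + q ^ m := Real.rpow_le_one_add_rpow hq (by linarith) (by linarith)
  have hmC : 2 * m ≤ 2 * m / C := by
    rw [le_div_iff₀ hC]
    nlinarith
  have hCC : 2 * m / C * C = 2 * m := div_mul_cancel₀ _ hC.ne'
  calc 2 * q + m * q ^ (m - 1) ≤ 2 * m * (1 + q ^ m) := by nlinarith
    _ ≤ (1 + 2 * m / C) * (1 + C * q ^ m) := by nlinarith [Real.rpow_nonneg hq m]
    _ ≤ (1 + 2 * m / C) * E := by gcongr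

theorem statement7 (m C : ℝ) (hm : 2 < m) (hC : 0 < C) (hC' : C ≤ min 1 (m - 1 - 2 / m)) :
    ∀ a q : ℝ, 1 + m / (m - 2) ≤ a → 0 ≤ q →
      1 + C * q ^ m ≤ a - q ^ (2:ℝ) + (m - 1) * q ^ m ∧
      2 * q + m * q ^ (m - 1) ≤ (1 + 2 * m / C) * (a - q ^ (2:ℝ) + (m - 1) * q ^ m) := by
  intro a q ha hq
  obtain ⟨hC1, hCm⟩ := le_min_iff.mp hC'
  have part1 := one_add_mul_rpow_le hm hCm ha hq
  exact ⟨part1, add_mul_rpow_sub_one_le hm.le hC hC1 hq part1⟩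
end
end

section
/- Let N ≥ 1, m > 2, and let f : ℝ^N → ℝ be continuous and satisfy hypothesis (H1). Let λ ∈ ℝ and let φ : ℝ^N → ℝ be of class C², bounded from below, and satisfy λ − Δφ(x) + |Dφ(x)|^m = f(x) for all x ∈ ℝ^N. Then φ(x)/|x| → +∞ as |x| → ∞. -/
open Set Filter Topology Metric

noncomputable section

/-! Put `c₀ = inf φ` and fix `x` with `‖x‖ = 2r`. On the ball `B(x, r)`, (H1) gives
`-Δφ + |Dφ|^m = f - λ ≥ K ≍ r^α`. Touch `φ` from below by the paraboloid
`c₀ + b (r² - |z - x|²)`: if `φ + b|z - x|²` attained its minimum over the closed ball at an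
interior point `y`, then `|Dφ(y)| ≤ 2br` and `-Δφ(y) ≤ 2bN`, so `K ≤ 2bN + (2br)^m`. With
`2br = (K/2)^{1/m}` and `r > N` this is impossible, so the minimum lies on the sphere, where
`φ ≥ c₀`; hence `φ(x) ≥ c₀ + b r² = c₀ + (K/2)^{1/m} r / 2`, and `(K/2)^{1/m} → ∞`. -/

open InnerProductSpace Laplacian Module

theorem IsLocalMin.deriv_deriv_nonneg {f : ℝ → ℝ} {a : ℝ} (h : IsLocalMin f a)
    (hc : ContinuousAt f a) : 0 ≤ deriv (deriv f) a := by
  by_contra! hneg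
  have hright : ∀ᶠ x in 𝓝[>] a, deriv f x < 0 :=
    deriv_neg_right_of_sign_deriv <| nhdsWithin_le_nhds <|
      eventually_nhdsWithin_sign_eq_of_deriv_neg hneg h.deriv_eq_zero
  obtain ⟨t, hat, ht⟩ :=
    mem_nhdsGT_iff_exists_Ioc_subset.1 (hright.and (nhdsWithin_le_nhds h))
  have hdiff : ∀ x ∈ Ioc a t, DifferentiableAt ℝ f x := fun x hx =>
    differentiableAt_of_deriv_ne_zero (ht hx).1.ne
  have hcont : ContinuousOn f (Icc a t) := by
    intro x hx
    rcases eq_or_lt_of_le hx.1 with rfl | hax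
    · exact hc.continuousWithinAt
    · exact (hdiff x ⟨hax, hx.2⟩).continuousAt.continuousWithinAt
  obtain ⟨ξ, hξ, hslope⟩ := exists_deriv_eq_slope f hat hcont
    fun x hx => (hdiff x (Ioo_subset_Ioc_self hx)).differentiableWithinAt
  have hslope_nonneg : 0 ≤ (f t - f a) / (t - a) :=
    div_nonneg (sub_nonneg.2 (ht ⟨hat, le_rfl⟩).2) (sub_nonneg.2 hat.le)
  linarith [(ht (Ioo_subset_Ioc_self hξ)).1]

section SecondDerivativeTest
variable {E : Type*} [NormedAddCommGroup E] [NormedSpace ℝ E]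

theorem IsLocalMin.iteratedFDeriv_two_nonneg {w : E → ℝ} {y : E} (h : IsLocalMin w y)
    (hw : ContDiffAt ℝ 2 w y) (v : E) : 0 ≤ iteratedFDeriv ℝ 2 w y ![v, v] := by
  set l : ℝ → E := fun t => y + t • v
  have hl : ∀ t, HasDerivAt l v t := fun t => by
    convert ((hasDerivAt_id t).smul_const v).const_add y using 1
    · simp [l]
    · exact (one_smul ℝ v).symm
  have hlc : Continuous l := by fun_prop
  have hl0 : l 0 = y := by simp [l]
  have hw1 : ∀ᶠ t in 𝓝 0, DifferentiableAt ℝ w (l t) := by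
    have := hlc.tendsto 0
    rw [hl0] at this
    exact this.eventually ((hw.eventually (by simp)).mono fun z hz =>
      hz.differentiableAt (by norm_num))
  have hderiv : deriv (w ∘ l) =ᶠ[𝓝 0] fun t => fderiv ℝ w (l t) v :=
    hw1.mono fun t ht => (ht.hasFDerivAt.comp_hasDerivAt t (hl t)).deriv
  have hderiv2 : HasDerivAt (fun t => fderiv ℝ w (l t) v) (fderiv ℝ (fderiv ℝ w) y v v) 0 := by
    have hw2 := (hw.fderiv_right (m := 1) le_rfl).differentiableAt one_ne_zero
    rw [← hl0] at hw2
    simpa [hl0] using (hw2.hasFDerivAt.comp_hasDerivAt 0 (hl 0)).clm_apply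
      (hasDerivAt_const 0 v)
  have hmin : IsLocalMin (w ∘ l) 0 :=
    IsMinFilter.comp_tendsto (by rw [hl0]; exact h) (hlc.tendsto 0)
  have hcont : ContinuousAt (w ∘ l) 0 :=
    (by rw [hl0]; exact hw.continuousAt : ContinuousAt w (l 0)).comp hlc.continuousAt
  rw [iteratedFDeriv_two_apply]
  simpa only [Matrix.cons_val_zero, Matrix.cons_val_one, ← hderiv2.deriv, ← hderiv.deriv_eq]
    using hmin.deriv_deriv_nonneg hcont

end SecondDerivativeTest

section Paraboloid
variable {F : Type*} [NormedAddCommGroup F] [InnerProductSpace ℝ F]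

theorem hasFDerivAt_norm_sub_sq (x₀ y : F) :
    HasFDerivAt (fun z => ‖z - x₀‖ ^ 2) (2 • innerSL ℝ (y - x₀)) y := by
  simpa using ((hasFDerivAt_id y).sub_const x₀).norm_sq

theorem fderiv_fderiv_norm_sub_sq (x₀ y : F) :
    fderiv ℝ (fderiv ℝ fun z => ‖z - x₀‖ ^ 2) y = 2 • innerSL ℝ := by
  have hD : fderiv ℝ (fun z => ‖z - x₀‖ ^ 2) = fun z => (2 • innerSL ℝ (E := F)) (z - x₀) :=
    funext fun z => by simpa using (hasFDerivAt_norm_sub_sq x₀ z).fderiv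
  rw [hD]
  exact ((2 • innerSL ℝ (E := F)).hasFDerivAt.comp y (hasFDerivAt_sub_const x₀)).fderiv

theorem iteratedFDeriv_two_norm_sub_sq (x₀ y v : F) :
    iteratedFDeriv ℝ 2 (fun z => ‖z - x₀‖ ^ 2) y ![v, v] = 2 * ‖v‖ ^ 2 := by
  rw [iteratedFDeriv_two_apply, fderiv_fderiv_norm_sub_sq]
  simp only [Matrix.cons_val_zero, Matrix.cons_val_one, smul_apply, nsmul_eq_mul, Nat.cast_ofNat]
  exact congrArg (2 * ·) (real_inner_self_eq_norm_sq v)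

theorem laplacian_norm_sub_sq [FiniteDimensional ℝ F] (x₀ y : F) :
    Δ (fun z => ‖z - x₀‖ ^ 2) y = 2 * finrank ℝ F := by
  simp [laplacian_eq_iteratedFDeriv_stdOrthonormalBasis, iteratedFDeriv_two_norm_sub_sq, mul_comm]

theorem IsLocalMin.laplacian_nonneg [FiniteDimensional ℝ F] {w : F → ℝ} {y : F}
    (h : IsLocalMin w y) (hw : ContDiffAt ℝ 2 w y) : 0 ≤ Δ w y := by
  rw [laplacian_eq_iteratedFDeriv_stdOrthonormalBasis]
  exact Finset.sum_nonneg fun i _ => h.iteratedFDeriv_two_nonneg hw _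

variable {φ : F → ℝ} {b : ℝ} {x₀ y : F}

theorem IsLocalMin.neg_laplacian_le_of_add_norm_sub_sq [FiniteDimensional ℝ F]
    (h : IsLocalMin (fun z => φ z + b * ‖z - x₀‖ ^ 2) y) (hφ : ContDiffAt ℝ 2 φ y) :
    -Δ φ y ≤ 2 * b * finrank ℝ F := by
  have hq : ContDiffAt ℝ 2 (fun z => ‖z - x₀‖ ^ 2) y :=
    ((contDiff_norm_sq ℝ).comp (contDiff_id.sub contDiff_const)).contDiffAt
  have hbq : ContDiffAt ℝ 2 (b • fun z => ‖z - x₀‖ ^ 2) y := hq.const_smul b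
  have hw : 0 ≤ Δ (φ + b • fun z => ‖z - x₀‖ ^ 2) y := h.laplacian_nonneg (hφ.add hbq)
  rw [hφ.laplacian_add hbq, laplacian_smul b hq, laplacian_norm_sub_sq] at hw
  simp only [smul_eq_mul] at hw
  linarith

theorem IsLocalMin.norm_gradient_eq_of_add_norm_sub_sq [CompleteSpace F]
    (h : IsLocalMin (fun z => φ z + b * ‖z - x₀‖ ^ 2) y) (hφ : DifferentiableAt ℝ φ y) :
    ‖gradient φ y‖ = 2 * |b| * ‖y - x₀‖ := by
  have hD := h.hasFDerivAt_eq_zero (hφ.hasFDerivAt.add ((hasFDerivAt_norm_sub_sq x₀ y).const_mul b))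
  rw [add_eq_zero_iff_eq_neg] at hD
  rw [gradient, LinearIsometryEquiv.norm_map, hD, norm_neg, norm_smul,
    ← Nat.cast_smul_eq_nsmul ℝ, norm_smul, innerSL_apply_norm]
  simp [mul_assoc, mul_left_comm]

theorem add_mul_sq_le_of_neg_laplacian_add_rpow_ge [FiniteDimensional ℝ F]
    (hφ : ContDiff ℝ 2 φ) {m r c₀ K : ℝ} (hm : 0 ≤ m) (hb : 0 ≤ b) (hr : 0 ≤ r)
    (hsphere : ∀ y ∈ sphere x₀ r, c₀ ≤ φ y)
    (hK : ∀ y ∈ ball x₀ r, K ≤ -Δ φ y + ‖gradient φ y‖ ^ m)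
    (hbK : 2 * b * finrank ℝ F + (2 * b * r) ^ m < K) :
    c₀ + b * r ^ 2 ≤ φ x₀ := by
  set w : F → ℝ := fun z => φ z + b * ‖z - x₀‖ ^ 2
  have hw : Continuous w := hφ.continuous.add (by fun_prop)
  obtain ⟨y, hy, hmin⟩ :=
    (isCompact_closedBall x₀ r).exists_isMinOn (nonempty_closedBall.2 hr) hw.continuousOn
  have hy_sphere : y ∈ sphere x₀ r := by
    by_contra hys
    have hyb : y ∈ ball x₀ r :=
      mem_ball.2 (lt_of_le_of_ne (mem_closedBall.1 hy) (by simpa [dist_eq_norm] using hys))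
    have hloc : IsLocalMin w y := hmin.isLocalMin (closedBall_mem_nhds_of_mem hyb)
    have hlap := hloc.neg_laplacian_le_of_add_norm_sub_sq hφ.contDiffAt
    have hgrad : ‖gradient φ y‖ ≤ 2 * b * r := by
      rw [hloc.norm_gradient_eq_of_add_norm_sub_sq (hφ.differentiable two_ne_zero y),
        abs_of_nonneg hb, ← dist_eq_norm]
      exact mul_le_mul_of_nonneg_left (mem_ball.1 hyb).le (by positivity)
    have := Real.rpow_le_rpow (norm_nonneg _) hgrad hm
    linarith [hK y hyb]
  calc c₀ + b * r ^ 2 ≤ w y := by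
        rw [← mem_sphere_iff_norm.1 hy_sphere]
        linarith [hsphere y hy_sphere]
    _ ≤ w x₀ := hmin (mem_closedBall_self hr)
    _ = φ x₀ := by simp [w]

end Paraboloid

theorem eLap_eq_laplacian {N : ℕ} (φ : Spc N → ℝ) : eLap N φ = Δ φ := by
  rw [laplacian_eq_iteratedFDeriv_orthonormalBasis φ (EuclideanSpace.basisFun (Fin N) ℝ)]
  ext x
  simp [eLap, EuclideanSpace.basisFun_apply]

theorem H1data.sub_le_of_le_norm {N : ℕ} {f : Spc N → ℝ} {g : ℝ → ℝ} {α g₀ f₀ : ℝ}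
    (h : H1data N f g α g₀ f₀) {r : ℝ} (hr : 0 ≤ r) {y : Spc N} (hy : r ≤ ‖y‖) :
    f₀⁻¹ * g₀⁻¹ * r ^ α - f₀ ≤ f y := by
  obtain ⟨hα, hg₀, hf₀, -, -, hg, hf⟩ := h
  calc f₀⁻¹ * g₀⁻¹ * r ^ α - f₀ ≤ f₀⁻¹ * (g₀⁻¹ * ‖y‖ ^ α) - f₀ := by
        rw [mul_assoc]
        gcongr
    _ ≤ f₀⁻¹ * g ‖y‖ - f₀ := by gcongr; exact hg _ (norm_nonneg y)
    _ ≤ f y := (hf y).1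

theorem IsErgodicSolution.add_rpow_mul_le_of_ball {N : ℕ} {m lam c₀ K r : ℝ} {f φ : Spc N → ℝ}
    (hφ : IsErgodicSolution N m f lam φ) (hm : 1 ≤ m) (hc₀ : ∀ y, c₀ ≤ φ y) {x : Spc N}
    (hNr : N < r) (hK2 : 2 ≤ K) (hK : ∀ y ∈ ball x r, K ≤ f y - lam) :
    c₀ + (K / 2) ^ (1 / m) * r / 2 ≤ φ x := by
  obtain ⟨hφ2, heq⟩ := hφ
  set a := (K / 2) ^ (1 / m)
  have hr : 0 < r := (Nat.cast_nonneg N).trans_lt hNr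
  have ha : 0 < a := Real.rpow_pos_of_pos (by linarith) _
  have ha_le : a ≤ K / 2 := Real.rpow_le_self_of_one_le (by linarith)
    ((div_le_one (by linarith)).2 hm)
  have ham : a ^ m = K / 2 := by
    rw [← Real.rpow_mul (by linarith), one_div_mul_cancel (by linarith), Real.rpow_one]
  have hbK : 2 * (a / (2 * r)) * finrank ℝ (Spc N) + (2 * (a / (2 * r)) * r) ^ m < K := by
    have hNa : a * N / r < a := by rw [div_lt_iff₀ hr]; gcongr
    rw [finrank_euclideanSpace_fin, show 2 * (a / (2 * r)) * r = a by field_simp, ham,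
      show 2 * (a / (2 * r)) * N = a * N / r by field_simp]
    linarith
  have := add_mul_sq_le_of_neg_laplacian_add_rpow_ge hφ2 (by linarith) (by positivity) hr.le
    (fun y _ => hc₀ y) (fun y hy => by rw [← eLap_eq_laplacian]; linarith [heq y, hK y hy]) hbK
  convert this using 2
  field_simp

theorem IsErgodicSolution.eventually_le_div_norm {N : ℕ} {m lam c₀ : ℝ} {f φ : Spc N → ℝ}
    {g : ℝ → ℝ} {α g₀ f₀ : ℝ} (hφ : IsErgodicSolution N m f lam φ) (hm : 1 ≤ m)
    (hf : H1data N f g α g₀ f₀) (hc₀ : ∀ y, c₀ ≤ φ y) (M : ℝ) :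
    ∀ᶠ r in atTop, ∀ x : Spc N, ‖x‖ = 2 * r → M ≤ φ x / ‖x‖ := by
  set K : ℝ → ℝ := fun r => f₀⁻¹ * g₀⁻¹ * r ^ α - f₀ - lam
  have hK : Tendsto K atTop atTop := by
    obtain ⟨hα, hg₀, hf₀, -⟩ := hf
    exact tendsto_atTop_add_const_right _ _ <| tendsto_atTop_add_const_right _ _ <|
      (tendsto_rpow_atTop hα).const_mul_atTop (by positivity)
  have hgrowth : Tendsto (fun r => c₀ / (2 * r) + (K r / 2) ^ (1 / m) / 4) atTop atTop :=
    (tendsto_const_nhds.div_atTop (tendsto_id.const_mul_atTop two_pos)).add_atTop <|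
      ((tendsto_rpow_atTop (one_div_pos.2 (by linarith))).comp
        (hK.atTop_div_const two_pos)).atTop_div_const (by norm_num)
  filter_upwards [eventually_gt_atTop (N : ℝ), hK.eventually_ge_atTop 2,
    hgrowth.eventually_ge_atTop M] with r hNr hK2 hM x hx
  have hr : 0 < r := (Nat.cast_nonneg N).trans_lt hNr
  have hball : ∀ y ∈ ball x r, K r ≤ f y - lam := fun y hy => by
    have : r ≤ ‖y‖ := by
      have := norm_sub_norm_le x y
      rw [← dist_eq_norm, dist_comm] at this
      linarith [mem_ball.1 hy]
    linarith [hf.sub_le_of_le_norm hr.le this]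
  rw [hx, le_div_iff₀ (by positivity)]
  calc M * (2 * r) ≤ (c₀ / (2 * r) + (K r / 2) ^ (1 / m) / 4) * (2 * r) := by gcongr
    _ = c₀ + (K r / 2) ^ (1 / m) * r / 2 := by field_simp; ring
    _ ≤ φ x := hφ.add_rpow_mul_le_of_ball hm hc₀ hNr hK2 hball

theorem statement9_general (N : ℕ) (m : ℝ) (hm : 2 < m)
    (f : Spc N → ℝ) (hH1 : H1 N f)
    (lam : ℝ) (φ : Spc N → ℝ) (hφ : IsErgodicSolution N m f lam φ)
    (hφb : BddBelow (range φ)) :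
    ∀ M : ℝ, ∃ R > (0:ℝ), ∀ x : Spc N, R ≤ ‖x‖ → M ≤ φ x / ‖x‖ := by
  obtain ⟨g, α, g₀, f₀, hf⟩ := hH1
  obtain ⟨c₀, hc₀⟩ := hφb
  intro M
  obtain ⟨R, hR⟩ := eventually_atTop.1 <|
    hφ.eventually_le_div_norm (by linarith) hf (fun y => hc₀ ⟨y, rfl⟩) M
  exact ⟨2 * max R 1, by positivity, fun x hx =>
    hR (‖x‖ / 2) (by linarith [le_max_left R 1]) x (by ring)⟩

theorem statement9 (N : ℕ) (hN : 1 ≤ N) (m : ℝ) (hm : 2 < m)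
    (f : Spc N → ℝ) (hf : Continuous f) (hH1 : H1 N f)
    (lam : ℝ) (φ : Spc N → ℝ) (hφ : IsErgodicSolution N m f lam φ)
    (hφb : BddBelow (range φ)) :
    ∀ M : ℝ, ∃ R > (0:ℝ), ∀ x : Spc N, R ≤ ‖x‖ → M ≤ φ x / ‖x‖ :=
  statement9_general N m hm f hH1 lam φ hφ hφb
end
end

section
/- Let m > 2 and β ∈ (0,1). Then there exist b > 0 and a function χ : (−∞, b) → ℝ of class C^∞ such that: χ(s) = 0 for all s ≤ 0; χ'(s) > 0 and χ''(s) > 0 for all s ∈ (0,b); χ(s) → +∞ as s → b⁻; and for all s ∈ (0,b), ((m−2)/m) · ( χ''(s) / [ (1+χ'(s))^m − (1+χ'(s)) ]^{2/m} )^{m/(m−2)} ≤ (χ'(s))^β. -/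
open Set Filter Topology Metric

noncomputable section

/-! The profile is `χ(s) = ∫₀ˢ e^{-1/t} / (b - t) dt`, so that `χ' = G := e^{-1/s} / (b - s)` and
`χ'' = G W` with `W = 1/s² + 1/(b - s)`; the logarithmic singularity of `∫ dt / (b - t)` makes `χ`
blow up at `b`. Since `(1 + G)^m - (1 + G) ≥ G (1 + G)^{m-1}`, the required inequality reduces to
`W ≤ G^{-δ} (1 + G)^{1 + ρ + δ}` with `ρ = β(m-2)/m` and `δ = (1-β)(m-2)/m`. Far from `b` this holds
because `G^{-δ} = e^{δ/s} (b - s)^δ` beats `1/s²` once `b - s` is large; near `b` we have `s` large,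
`G` bounded below, and `1/(b - s) = e^{1/s} G ≤ (1 + G)^ρ G`. -/

open Real

lemma mul_one_add_rpow_sub_one_le {m G : ℝ} (hm : 2 ≤ m) (hG : 0 ≤ G) :
    G * (1 + G) ^ (m - 1) ≤ (1 + G) ^ m - (1 + G) := by
  have hG1 : 0 < 1 + G := by linarith
  have h1 : (1 + G) ^ m = (1 + G) ^ (m - 1) * (1 + G) := by
    rw [← rpow_add_one hG1.ne']; ring_nf
  have h2 : 1 + G ≤ (1 + G) ^ (m - 1) := self_le_rpow_of_one_le (by linarith) (by linarith)
  rw [h1]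
  nlinarith

lemma rpow_ratio_le_rpow_of_logDeriv_le {m β G W : ℝ} (hm : 2 < m) (hG : 0 < G) (hW0 : 0 ≤ W)
    (hW : W ≤ G ^ (-((1 - β) * (m - 2) / m)) *
      (1 + G) ^ (1 + β * (m - 2) / m + (1 - β) * (m - 2) / m)) :
    (m - 2) / m * (G * W / ((1 + G) ^ m - (1 + G)) ^ (2 / m)) ^ (m / (m - 2)) ≤ G ^ β := by
  have hm0 : 0 < m := by linarith
  have hm2 : 0 < m - 2 := by linarith
  have hG1 : 0 < 1 + G := by linarith
  set D := (1 + G) ^ m - (1 + G)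
  have hD : G * (1 + G) ^ (m - 1) ≤ D := mul_one_add_rpow_sub_one_le hm.le hG.le
  have hDpos : 0 < D := lt_of_lt_of_le (by positivity) hD
  have hratio : G * W / D ^ (2 / m) ≤ G ^ (β * (m - 2) / m) := by
    rw [div_le_iff₀ (by positivity)]
    calc G * W
        ≤ G * (G ^ (-((1 - β) * (m - 2) / m)) *
            (1 + G) ^ (1 + β * (m - 2) / m + (1 - β) * (m - 2) / m)) := by gcongr
      _ = G ^ (β * (m - 2) / m) * (G * (1 + G) ^ (m - 1)) ^ (2 / m) := by
          have hGexp : G * G ^ (-((1 - β) * (m - 2) / m)) = G ^ (β * (m - 2) / m) * G ^ (2 / m) := by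
            rw [← rpow_add hG, show β * (m - 2) / m + 2 / m = 1 + -((1 - β) * (m - 2) / m) by
              field_simp; ring, rpow_add hG, rpow_one]
          rw [mul_rpow hG.le (by positivity), ← rpow_mul hG1.le, ← mul_assoc, hGexp,
            mul_assoc]
          congr 3
          field_simp
          ring
      _ ≤ G ^ (β * (m - 2) / m) * D ^ (2 / m) := by gcongr
  calc (m - 2) / m * (G * W / D ^ (2 / m)) ^ (m / (m - 2))
      ≤ 1 * (G ^ (β * (m - 2) / m)) ^ (m / (m - 2)) := by
        gcongr
        · rw [div_le_one hm0]; linarith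
      _ = G ^ β := by
        rw [one_mul, ← rpow_mul hG.le]
        congr 1
        field_simp

lemma inv_sq_add_inv_le_rpow_neg {δ s u : ℝ} (hδ : 0 < δ) (hs : 0 < s) (hu : 1 ≤ u)
    (huδ : 2 / δ ^ 2 ≤ u ^ δ) :
    (s ^ 2)⁻¹ + u⁻¹ ≤ (exp (-s⁻¹) * u⁻¹) ^ (-δ) := by
  have hu0 : 0 < u := by linarith
  have hrpow : (exp (-s⁻¹) * u⁻¹) ^ (-δ) = exp (δ * s⁻¹) * u ^ δ := by
    rw [mul_rpow (exp_pos _).le (by positivity), ← exp_mul, inv_rpow hu0.le, rpow_neg hu0.le,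
      inv_inv]
    ring_nf
  have hexp : 1 + (δ * s⁻¹) ^ 2 / 2 ≤ exp (δ * s⁻¹) := by
    nlinarith [quadratic_le_exp_of_nonneg (by positivity : 0 ≤ δ * s⁻¹), inv_pos.2 hs]
  have hinv : u⁻¹ ≤ u ^ δ := (inv_le_one_of_one_le₀ hu).trans (one_le_rpow hu hδ.le)
  have hsq : (s ^ 2)⁻¹ ≤ u ^ δ * ((δ * s⁻¹) ^ 2 / 2) := by
    have : 1 ≤ u ^ δ * (δ ^ 2 / 2) := by
      rw [div_le_iff₀ (by positivity)] at huδ; linarith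
    calc (s ^ 2)⁻¹ ≤ u ^ δ * (δ ^ 2 / 2) * (s ^ 2)⁻¹ := le_mul_of_one_le_left (by positivity) this
      _ = u ^ δ * ((δ * s⁻¹) ^ 2 / 2) := by ring
  rw [hrpow]
  nlinarith [rpow_nonneg hu0.le δ]

lemma add_mul_le_rpow_neg_mul_rpow {a c e G ρ δ : ℝ} (ha : a ≤ 1) (hc : 0 < c) (hcG : c ≤ G)
    (hρ : 0 ≤ ρ) (hδ : 0 ≤ δ) (he : e ≤ (1 + c) ^ ρ) :
    a + e * G ≤ G ^ (-δ) * (1 + G) ^ (1 + ρ + δ) := by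
  have hG : 0 < G := hc.trans_le hcG
  have hG1 : 0 < 1 + G := by linarith
  have hκ : 1 ≤ (1 + c) ^ ρ := one_le_rpow (by linarith) hρ
  calc a + e * G ≤ (1 + c) ^ ρ * (1 + G) := by nlinarith
    _ ≤ (1 + G) ^ ρ * (1 + G) := by gcongr
    _ ≤ ((1 + G) / G) ^ δ * ((1 + G) ^ ρ * (1 + G)) :=
        le_mul_of_one_le_left (by positivity)
          (one_le_rpow ((one_le_div hG).2 (by linarith)) hδ)
    _ = G ^ (-δ) * (1 + G) ^ (1 + ρ + δ) := by
        rw [div_rpow hG1.le hG.le, rpow_neg hG.le, rpow_add hG1, rpow_add hG1, rpow_one]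
        ring

lemma exists_inv_sq_add_inv_le {δ ρ : ℝ} (hδ : 0 < δ) (hρ : 0 < ρ) :
    ∃ b > 0, ∀ s ∈ Ioo 0 b,
      (s ^ 2)⁻¹ + (b - s)⁻¹ ≤
        (exp (-s⁻¹) * (b - s)⁻¹) ^ (-δ) * (1 + exp (-s⁻¹) * (b - s)⁻¹) ^ (1 + ρ + δ) := by
  set U := max 1 ((2 / δ ^ 2) ^ (1 / δ))
  set c := exp (-1) * U⁻¹
  set S := max 1 (1 / (ρ * log (1 + c)))
  have hU : 1 ≤ U := le_max_left _ _
  have hc : 0 < c := by positivity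
  have hlog : 0 < ρ * log (1 + c) := mul_pos hρ (log_pos (by linarith))
  refine ⟨U + S, by positivity, fun s ⟨hs, hsb⟩ => ?_⟩
  set G := exp (-s⁻¹) * (U + S - s)⁻¹
  by_cases hsU : U ≤ U + S - s
  · have hUδ : 2 / δ ^ 2 ≤ U ^ δ := by
      calc 2 / δ ^ 2 = ((2 / δ ^ 2) ^ (1 / δ)) ^ δ := by
            rw [← rpow_mul (by positivity), one_div_mul_cancel hδ.ne', rpow_one]
        _ ≤ U ^ δ := by gcongr; exact le_max_right _ _
    have hUs : U ^ δ ≤ (U + S - s) ^ δ := by gcongr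
    calc (s ^ 2)⁻¹ + (U + S - s)⁻¹ ≤ G ^ (-δ) :=
          inv_sq_add_inv_le_rpow_neg hδ hs (hU.trans hsU) (hUδ.trans hUs)
      _ ≤ G ^ (-δ) * (1 + G) ^ (1 + ρ + δ) :=
          le_mul_of_one_le_right (by positivity)
            (one_le_rpow (le_add_of_nonneg_right (by positivity)) (by positivity))
  · rw [not_le] at hsU
    have hS : S < s := by linarith
    have hs1 : 1 ≤ s := (le_max_left _ _).trans hS.le
    have hsinv : s⁻¹ ≤ ρ * log (1 + c) := by
      rw [inv_le_comm₀ hs hlog, ← one_div]; exact (le_max_right _ _).trans hS.le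
    have hcG : c ≤ G :=
      mul_le_mul (exp_le_exp.2 (neg_le_neg (inv_le_one_of_one_le₀ hs1)))
        (inv_anti₀ (by linarith) hsU.le) (by positivity) (exp_pos _).le
    have hexp : exp s⁻¹ ≤ (1 + c) ^ ρ := by
      rw [rpow_def_of_pos (by linarith), mul_comm]; exact exp_le_exp.2 hsinv
    have hinv : (U + S - s)⁻¹ = exp s⁻¹ * G := by
      rw [← mul_assoc, ← exp_add, add_neg_cancel, exp_zero, one_mul]
    rw [hinv]
    exact add_mul_le_rpow_neg_mul_rpow (inv_le_one_of_one_le₀ (one_le_pow₀ hs1)) hc hcG hρ.le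
      hδ.le hexp

def blowupRate (b t : ℝ) : ℝ := expNegInvGlue t * (b - t)⁻¹

def blowupProfile (b s : ℝ) : ℝ := ∫ t in (0 : ℝ)..s, blowupRate b t

section BlowupProfile

variable {b s : ℝ}

lemma blowupRate_of_pos (hs : 0 < s) : blowupRate b s = exp (-s⁻¹) * (b - s)⁻¹ := by
  simp only [blowupRate, expNegInvGlue, if_neg (not_le.2 hs)]

lemma contDiffOn_blowupRate : ContDiffOn ℝ (⊤ : ℕ∞) (blowupRate b) (Iio b) :=
  expNegInvGlue.contDiff.contDiffOn.mul
    ((contDiffOn_const.sub contDiffOn_id).inv fun _ hx => (sub_pos.2 hx).ne')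

lemma intervalIntegrable_blowupRate {x y : ℝ} (hx : x < b) (hy : y < b) :
    IntervalIntegrable (blowupRate b) MeasureTheory.volume x y :=
  (contDiffOn_blowupRate.continuousOn.mono fun _ ht =>
    ht.2.trans_lt (max_lt hx hy)).intervalIntegrable

lemma hasDerivAt_blowupProfile (hb : 0 < b) (hs : s < b) :
    HasDerivAt (blowupProfile b) (blowupRate b s) s :=
  intervalIntegral.integral_hasDerivAt_right (intervalIntegrable_blowupRate hb hs)
    (contDiffOn_blowupRate.continuousOn.stronglyMeasurableAtFilter isOpen_Iio s hs)
    (contDiffOn_blowupRate.continuousOn.continuousAt (isOpen_Iio.mem_nhds hs))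

lemma deriv_blowupProfile_eqOn (hb : 0 < b) :
    EqOn (deriv (blowupProfile b)) (blowupRate b) (Iio b) :=
  fun _ hs => (hasDerivAt_blowupProfile hb hs).deriv

lemma contDiffOn_blowupProfile (hb : 0 < b) :
    ContDiffOn ℝ (⊤ : ℕ∞) (blowupProfile b) (Iio b) := by
  rw [contDiffOn_infty_iff_derivWithin (uniqueDiffOn_Iio b)]
  refine ⟨fun x hx => (hasDerivAt_blowupProfile hb hx).differentiableAt.differentiableWithinAt, ?_⟩
  exact contDiffOn_blowupRate.congr fun x hx =>
    (derivWithin_of_isOpen isOpen_Iio hx).trans (deriv_blowupProfile_eqOn hb hx)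

lemma blowupProfile_of_nonpos (hs : s ≤ 0) : blowupProfile b s = 0 := by
  refine (intervalIntegral.integral_congr (g := fun _ => 0) fun t ht => ?_).trans (by simp)
  have ht0 : t ≤ 0 := (uIcc_of_ge hs ▸ ht).2
  simp [blowupRate, expNegInvGlue.zero_of_nonpos ht0]

lemma deriv_blowupProfile (hb : 0 < b) (hs : s ∈ Ioo 0 b) :
    deriv (blowupProfile b) s = exp (-s⁻¹) * (b - s)⁻¹ :=
  (deriv_blowupProfile_eqOn hb hs.2).trans (blowupRate_of_pos hs.1)

lemma hasDerivAt_blowupRate (hs : s ∈ Ioo 0 b) :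
    HasDerivAt (blowupRate b) (exp (-s⁻¹) * (b - s)⁻¹ * ((s ^ 2)⁻¹ + (b - s)⁻¹)) s := by
  have hbs : b - s ≠ 0 := (sub_pos.2 hs.2).ne'
  have hexp : HasDerivAt (fun t => exp (-t⁻¹)) (exp (-s⁻¹) * (s ^ 2)⁻¹) s := by
    simpa using ((hasDerivAt_inv hs.1.ne').neg).exp
  have hinv : HasDerivAt (fun t => (b - t)⁻¹) (-(-1) / (b - s) ^ 2) s :=
    ((hasDerivAt_id s).const_sub b).inv hbs
  refine ((hexp.mul hinv).congr_of_eventuallyEq ?_).congr_deriv ?_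
  · filter_upwards [isOpen_Ioo.mem_nhds hs] with t ht using blowupRate_of_pos ht.1
  · field_simp

lemma deriv_deriv_blowupProfile (hb : 0 < b) (hs : s ∈ Ioo 0 b) :
    deriv (deriv (blowupProfile b)) s = exp (-s⁻¹) * (b - s)⁻¹ * ((s ^ 2)⁻¹ + (b - s)⁻¹) := by
  rw [(Filter.eventuallyEq_of_mem (isOpen_Iio.mem_nhds hs.2) (deriv_blowupProfile_eqOn hb)).deriv_eq]
  exact (hasDerivAt_blowupRate hs).deriv

lemma integral_inv_const_sub {a s : ℝ} (ha : a < b) (hs : s < b) :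
    ∫ t in a..s, (b - t)⁻¹ = log (b - a) - log (b - s) := by
  rw [intervalIntegral.integral_comp_sub_left (fun x => x⁻¹) b,
    integral_inv_of_pos (sub_pos.2 hs) (sub_pos.2 ha), log_div (by linarith) (by linarith)]

lemma blowupProfile_add_log_le {a : ℝ} (ha : 0 < a) (has : a ≤ s) (hsb : s < b) :
    blowupProfile b a + exp (-a⁻¹) * (log (b - a) - log (b - s)) ≤ blowupProfile b s := by
  have hab : a < b := has.trans_lt hsb
  have hinv : IntervalIntegrable (fun t => exp (-a⁻¹) * (b - t)⁻¹) MeasureTheory.volume a s :=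
    (((continuousOn_const.sub continuousOn_id).inv₀ fun t (ht : t < b) => (sub_pos.2 ht).ne').mono
      fun t ht => ht.2.trans_lt (max_lt hab hsb)).intervalIntegrable.const_mul _
  have hbound : ∫ t in a..s, exp (-a⁻¹) * (b - t)⁻¹ ≤ ∫ t in a..s, blowupRate b t := by
    refine intervalIntegral.integral_mono_on has hinv (intervalIntegrable_blowupRate hab hsb)
      fun t ⟨hat, hts⟩ => ?_
    rw [blowupRate_of_pos (ha.trans_le hat)]
    gcongr
    exact inv_nonneg.2 (by linarith)
  rw [intervalIntegral.integral_const_mul, integral_inv_const_sub hab hsb] at hbound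
  calc _ ≤ blowupProfile b a + ∫ t in a..s, blowupRate b t := add_le_add_right hbound _
    _ = blowupProfile b s := intervalIntegral.integral_add_adjacent_intervals
        (intervalIntegrable_blowupRate (ha.trans hab) hab) (intervalIntegrable_blowupRate hab hsb)

lemma tendsto_blowupProfile (hb : 0 < b) : Tendsto (blowupProfile b) (𝓝[<] b) atTop := by
  have hsub : Tendsto (fun s => b - s) (𝓝[<] b) (𝓝[>] 0) := by
    convert (continuous_sub_left b).continuousWithinAt.tendsto_nhdsWithin
      (show MapsTo (fun s => b - s) (Iio b) (Ioi 0) from fun _ hs => mem_Ioi.2 (sub_pos.2 hs)) using 2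
    simp
  have hlog : Tendsto (fun s => blowupProfile b (b / 2) +
      exp (-(b / 2)⁻¹) * (log (b - b / 2) - log (b - s))) (𝓝[<] b) atTop :=
    tendsto_atTop_add_const_left _ _ <| Tendsto.const_mul_atTop (exp_pos _) <|
      tendsto_atTop_add_const_left _ _ <|
        tendsto_neg_atBot_atTop.comp (tendsto_log_nhdsGT_zero.comp hsub)
  refine tendsto_atTop_mono' _ ?_ hlog
  filter_upwards [Ico_mem_nhdsLT (half_lt_self hb)] with s hs
    using blowupProfile_add_log_le (half_pos hb) hs.1 hs.2

end BlowupProfile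

theorem statement11 (m β : ℝ) (hm : 2 < m) (hβ : β ∈ Set.Ioo (0:ℝ) 1) :
    ∃ b > (0:ℝ), ∃ χ : ℝ → ℝ,
      ContDiffOn ℝ (⊤ : ℕ∞) χ (Iio b) ∧
      (∀ s ≤ (0:ℝ), χ s = 0) ∧
      (∀ s ∈ Ioo (0:ℝ) b, 0 < deriv χ s ∧ 0 < deriv (deriv χ) s) ∧
      Tendsto χ (𝓝[<] b) atTop ∧
      (∀ s ∈ Ioo (0:ℝ) b,
        ((m - 2) / m) *
          (deriv (deriv χ) s /
            ((1 + deriv χ s) ^ m - (1 + deriv χ s)) ^ (2 / m)) ^ (m / (m - 2))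
          ≤ (deriv χ s) ^ β) := by
  obtain ⟨hβ0, hβ1⟩ := hβ
  have hm2 : 0 < m - 2 := by linarith
  obtain ⟨b, hb, hW⟩ := exists_inv_sq_add_inv_le (δ := (1 - β) * (m - 2) / m)
    (ρ := β * (m - 2) / m) (div_pos (mul_pos (sub_pos.2 hβ1) hm2) (by linarith)) (by positivity)
  refine ⟨b, hb, blowupProfile b, contDiffOn_blowupProfile hb,
    fun s hs => blowupProfile_of_nonpos hs, fun s hs => ?_, tendsto_blowupProfile hb,
    fun s hs => ?_⟩
  all_goals
    have hs0 : 0 < s := hs.1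
    have hbs : 0 < b - s := sub_pos.2 hs.2
    rw [deriv_deriv_blowupProfile hb hs, deriv_blowupProfile hb hs]
  · exact ⟨by positivity, by positivity⟩
  · exact rpow_ratio_le_rpow_of_logDeriv_le hm (by positivity) (by positivity) (hW s hs)
end
end

section
/- Let m > 2 and β ∈ (0,1). Then there exist M > 0 and a function ξ : ℝ → ℝ of class C^∞ such that: ξ(s) = s for all s ≤ 0; 0 < ξ'(s) < 1 and ξ''(s) < 0 for all s > 0; ξ is increasing and ξ(s) → M as s → +∞; and for all s > 0, ((m−2)/m) · ( −ξ''(s) / [ ξ'(s) − (ξ'(s))^m ]^{2/m} )^{m/(m−2)} ≤ (1 − ξ'(s))^β. -/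
/-!
Take `ξ s = ∫₀ˢ exp (-g t) dt` with `g = ramp δ`, i.e. `g t = δ t e^{-1/t}` for `t > 0` and
`g = 0` on `t ≤ 0`, so that `ξ' = e^{-g}` and `-ξ'' / ξ' = g' = δ e^{-1/s} (1 + 1/s)`.
Since `a - a^m ≥ a (1 - a)` for `0 < a < 1`, the required inequality follows from
`g' ≤ (1 - e^{-g})^θ` with `θ = (β (m - 2) + 2) / m < 1`. As `1 - e^{-g} ≥ g / 2` for `g ≤ 1`,
this holds for `δ` small: for `s ≤ 1` because `e^{-1/s}` is flatter than any power of `s`, and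
for `s ≥ 1` because `g'` is bounded while `g ≥ δ s / 3`, which also makes `ξ'` integrable, so
`ξ` has a finite limit.
-/

open Set Filter Topology Metric

noncomputable section

open Real MeasureTheory

lemma half_le_one_sub_exp_neg {x : ℝ} (h0 : 0 ≤ x) (h1 : x ≤ 1) : x / 2 ≤ 1 - exp (-x) := by
  have h : exp (-x) * (1 + x) ≤ 1 := by
    calc exp (-x) * (1 + x) ≤ exp (-x) * exp x := by gcongr; linarith [add_one_le_exp x]
      _ = 1 := by rw [← exp_add, neg_add_cancel, exp_zero]
  nlinarith [exp_pos (-x), mul_nonneg h0 (sub_nonneg.mpr h1)]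

lemma third_lt_exp_neg_inv {s : ℝ} (hs : 1 ≤ s) : 1 / 3 < exp (-s⁻¹) :=
  calc (1 : ℝ) / 3 < exp (-1) := by
        rw [exp_neg, one_div]; exact inv_strictAnti₀ (exp_pos 1) exp_one_lt_three
    _ ≤ exp (-s⁻¹) := exp_le_exp.mpr (neg_le_neg (inv_le_one_of_one_le₀ hs))

lemma exp_neg_inv_rpow_le {s θ : ℝ} (hs : 0 < s) (hθ : θ < 1) :
    exp (-s⁻¹) ^ (1 - θ) ≤ 2 * s ^ 2 / (1 - θ) ^ 2 := by
  have hy : 0 < (1 - θ) / s := div_pos (by linarith) hs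
  have hexp : ((1 - θ) / s) ^ 2 / 2 ≤ exp ((1 - θ) / s) := by
    simpa using pow_div_factorial_le_exp _ hy.le 2
  calc exp (-s⁻¹) ^ (1 - θ) = (exp ((1 - θ) / s))⁻¹ := by
        rw [← exp_mul, ← exp_neg]; ring_nf
    _ ≤ (((1 - θ) / s) ^ 2 / 2)⁻¹ := inv_anti₀ (by positivity) hexp
    _ = 2 * s ^ 2 / (1 - θ) ^ 2 := by field_simp

lemma div_le_rpow_of_rpow_one_sub_le {x k θ : ℝ} (hx : 0 < x) (hk : 0 < k)
    (h : x ^ (1 - θ) ≤ k) : x / k ≤ x ^ θ := by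
  have hsplit : x ^ θ * x ^ (1 - θ) = x := by rw [← rpow_add hx]; simp
  rw [div_le_iff₀ hk]
  nlinarith [rpow_pos_of_pos hx θ]

lemma mul_one_sub_le_sub_rpow {a m : ℝ} (ha0 : 0 < a) (ha1 : a < 1) (hm : 2 ≤ m) :
    a * (1 - a) ≤ a - a ^ m := by
  have : a ^ m ≤ a ^ (2 : ℝ) := rpow_le_rpow_of_exponent_ge ha0 ha1.le hm
  rw [rpow_two] at this
  nlinarith

lemma mul_div_rpow_rpow_le_of_le_rpow {m β a G : ℝ} (hm : 2 < m) (ha0 : 0 < a) (ha1 : a < 1)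
    (hG : 0 ≤ G) (hGa : G ≤ (1 - a) ^ ((β * (m - 2) + 2) / m)) :
    ((m - 2) / m) * ((G * a) / (a - a ^ m) ^ (2 / m)) ^ (m / (m - 2)) ≤ (1 - a) ^ β := by
  have hm0 : 0 < m := by linarith
  have h1a : 0 < 1 - a := by linarith
  have hsub := mul_one_sub_le_sub_rpow ha0 ha1 hm.le
  have ha2m : a ≤ a ^ (2 / m) := by
    simpa using rpow_le_rpow_of_exponent_ge ha0 ha1.le ((div_le_one hm0).mpr hm.le)
  have hbase : (G * a) / (a - a ^ m) ^ (2 / m) ≤ (1 - a) ^ (β * (m - 2) / m) :=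
    calc (G * a) / (a - a ^ m) ^ (2 / m) ≤ (G * a) / (a * (1 - a)) ^ (2 / m) := by
          gcongr
      _ ≤ (1 - a) ^ ((β * (m - 2) + 2) / m) * a ^ (2 / m) / (a * (1 - a)) ^ (2 / m) := by
          gcongr
      _ = (1 - a) ^ (β * (m - 2) / m) := by
          rw [mul_rpow ha0.le h1a.le, add_div, rpow_add h1a]
          field_simp
  have hratio : 0 ≤ (G * a) / (a - a ^ m) ^ (2 / m) :=
    div_nonneg (mul_nonneg hG ha0.le) (rpow_nonneg (by nlinarith) _)
  calc ((m - 2) / m) * ((G * a) / (a - a ^ m) ^ (2 / m)) ^ (m / (m - 2))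
      ≤ 1 * ((1 - a) ^ (β * (m - 2) / m)) ^ (m / (m - 2)) :=
        mul_le_mul ((div_le_one hm0).mpr (by linarith))
          (rpow_le_rpow hratio hbase (div_nonneg hm0.le (by linarith)))
          (rpow_nonneg hratio _) zero_le_one
    _ = (1 - a) ^ β := by
        rw [one_mul, ← rpow_mul h1a.le]
        congr 1
        field_simp [(by linarith : m - 2 ≠ 0)]

section Primitive

variable {p : ℝ → ℝ}

lemma contDiff_integral_zero_left (hp : ContDiff ℝ (⊤ : ℕ∞) p) :
    ContDiff ℝ (⊤ : ℕ∞) (fun s => ∫ t in (0 : ℝ)..s, p t) := by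
  rw [contDiff_infty_iff_deriv, funext (hp.continuous.deriv_integral p 0)]
  exact ⟨fun s => (hp.continuous.integral_hasStrictDerivAt 0 s).hasDerivAt.differentiableAt, hp⟩

lemma integral_zero_left_eq_self (hp : ∀ t ≤ 0, p t = 1) {s : ℝ} (hs : s ≤ 0) :
    ∫ t in (0 : ℝ)..s, p t = s := by
  have h : ∀ t ∈ uIcc 0 s, p t = 1 := fun t ht => hp t (by
    rw [uIcc_of_ge hs] at ht; exact ht.2)
  rw [intervalIntegral.integral_congr h]
  simp

lemma strictMono_integral_zero_left (hp : Continuous p) (hpos : ∀ t, 0 < p t) :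
    StrictMono (fun s => ∫ t in (0 : ℝ)..s, p t) :=
  strictMono_of_deriv_pos fun s => (hp.deriv_integral p 0 s).symm ▸ hpos s

end Primitive

def ramp (δ s : ℝ) : ℝ := δ * (s * expNegInvGlue s)

section Ramp

variable {δ s : ℝ}

lemma ramp_of_nonpos (δ : ℝ) (hs : s ≤ 0) : ramp δ s = 0 := by
  simp [ramp, expNegInvGlue.zero_of_nonpos hs]

lemma ramp_of_pos (δ : ℝ) (hs : 0 < s) : ramp δ s = δ * (s * exp (-s⁻¹)) := by
  simp [ramp, expNegInvGlue, not_le.mpr hs]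

lemma ramp_pos (hδ : 0 < δ) (hs : 0 < s) : 0 < ramp δ s :=
  mul_pos hδ (mul_pos hs (expNegInvGlue.pos_of_pos hs))

lemma contDiff_ramp (δ : ℝ) : ContDiff ℝ (⊤ : ℕ∞) (ramp δ) :=
  contDiff_const.mul (contDiff_id.mul expNegInvGlue.contDiff)

lemma hasDerivAt_ramp (δ : ℝ) (hs : 0 < s) :
    HasDerivAt (ramp δ) (δ * (exp (-s⁻¹) * (1 + s⁻¹))) s := by
  have heq : (fun x => δ * (x * exp (-x⁻¹))) =ᶠ[𝓝 s] ramp δ := by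
    filter_upwards [Ioi_mem_nhds hs] with x hx
    exact (ramp_of_pos δ hx).symm
  have hE : HasDerivAt (fun x : ℝ => exp (-x⁻¹)) (exp (-s⁻¹) * (s ^ 2)⁻¹) s := by
    simpa using ((hasDerivAt_inv hs.ne').neg).exp
  refine ((((hasDerivAt_id s).mul hE).const_mul δ).congr_of_eventuallyEq heq.symm).congr_deriv ?_
  simp only [id]
  field_simp

lemma deriv_deriv_integral_exp_neg_ramp (δ : ℝ) (hs : 0 < s) :
    deriv (deriv fun s => ∫ t in (0 : ℝ)..s, exp (-ramp δ t)) s =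
      -(δ * (exp (-s⁻¹) * (1 + s⁻¹))) * exp (-ramp δ s) := by
  rw [funext ((contDiff_ramp δ).neg.exp.continuous.deriv_integral _ 0)]
  exact ((hasDerivAt_ramp δ hs).neg.exp).deriv.trans (by simp only [Pi.neg_apply]; ring)

lemma mul_le_ramp (hδ : 0 < δ) (hs : 1 ≤ s) : δ / 3 * s ≤ ramp δ s := by
  rw [ramp_of_pos δ (by linarith)]
  nlinarith [mul_pos hδ (by linarith : (0 : ℝ) < s), third_lt_exp_neg_inv hs]

lemma integrableOn_exp_neg_ramp (hδ : 0 < δ) :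
    IntegrableOn (fun s => exp (-ramp δ s)) (Ioi 0) := by
  have hcont : Continuous fun s => exp (-ramp δ s) := (contDiff_ramp δ).neg.exp.continuous
  rw [← Ioc_union_Ioi_eq_Ioi zero_le_one]
  refine hcont.integrableOn_Ioc.union
    ((exp_neg_integrableOn_Ioi 1 (by positivity : 0 < δ / 3)).mono'
      hcont.aestronglyMeasurable.restrict ?_)
  refine (ae_restrict_iff' measurableSet_Ioi).mpr (ae_of_all _ fun s hs => ?_)
  rw [norm_of_nonneg (exp_pos _).le, exp_le_exp, neg_mul, neg_le_neg_iff]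
  exact mul_le_ramp hδ (le_of_lt hs)

lemma lt_one_of_rpow_le {θ : ℝ} (hθ0 : 0 ≤ θ) (hθ1 : θ < 1) (hδ0 : 0 < δ)
    (hδ : δ ^ (1 - θ) ≤ (1 - θ) ^ 2 / 12) : δ < 1 := by
  refine (rpow_lt_one_iff' hδ0.le (sub_pos.mpr hθ1)).mp (hδ.trans_lt ?_)
  nlinarith

lemma ramp_slope_le_of_one_le {θ : ℝ} (hθ0 : 0 ≤ θ) (hθ1 : θ < 1) (hδ0 : 0 < δ)
    (hδ : δ ^ (1 - θ) ≤ (1 - θ) ^ 2 / 12) (hs : 1 ≤ s) :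
    δ * (exp (-s⁻¹) * (1 + s⁻¹)) ≤ (1 - exp (-ramp δ s)) ^ θ := by
  have hδ1 := lt_one_of_rpow_le hθ0 hθ1 hδ0 hδ
  have hE1 : exp (-s⁻¹) ≤ 1 := exp_le_one_iff.mpr (neg_nonpos.mpr (by positivity))
  have hs1 : s⁻¹ ≤ 1 := inv_le_one_of_one_le₀ hs
  have hramp : δ / 3 ≤ ramp δ s := le_trans (by nlinarith) (mul_le_ramp hδ0 hs)
  have hx : δ / 6 ≤ 1 - exp (-ramp δ s) :=
    calc δ / 6 = δ / 3 / 2 := by ring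
      _ ≤ 1 - exp (-(δ / 3)) := half_le_one_sub_exp_neg (by positivity) (by linarith)
      _ ≤ 1 - exp (-ramp δ s) := by gcongr
  have hk : (δ / 6) ^ (1 - θ) ≤ 1 / 12 :=
    calc (δ / 6) ^ (1 - θ) ≤ δ ^ (1 - θ) := by gcongr; linarith
      _ ≤ 1 / 12 := by nlinarith
  calc δ * (exp (-s⁻¹) * (1 + s⁻¹)) ≤ (δ / 6) / (1 / 12) := by
        nlinarith [mul_le_mul hE1 (add_le_add_left hs1 1) (by positivity) zero_le_one]
    _ ≤ (δ / 6) ^ θ := div_le_rpow_of_rpow_one_sub_le (by positivity) (by norm_num) hk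
    _ ≤ (1 - exp (-ramp δ s)) ^ θ := by gcongr

lemma ramp_slope_le_of_le_one {θ : ℝ} (hθ0 : 0 ≤ θ) (hθ1 : θ < 1) (hδ0 : 0 < δ)
    (hδ : δ ^ (1 - θ) ≤ (1 - θ) ^ 2 / 12) (hs0 : 0 < s) (hs1 : s ≤ 1) :
    δ * (exp (-s⁻¹) * (1 + s⁻¹)) ≤ (1 - exp (-ramp δ s)) ^ θ := by
  have hδ1 := lt_one_of_rpow_le hθ0 hθ1 hδ0 hδ
  set E := exp (-s⁻¹)
  have hE0 : 0 < E := exp_pos _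
  have hE1 : E ≤ 1 := exp_le_one_iff.mpr (neg_nonpos.mpr (by positivity))
  have hramp : ramp δ s = δ * (s * E) := ramp_of_pos δ hs0
  have hramp0 := ramp_pos hδ0 hs0
  have hx : ramp δ s / 2 ≤ 1 - exp (-ramp δ s) :=
    half_le_one_sub_exp_neg hramp0.le (by rw [hramp]; nlinarith [mul_pos hs0 hE0])
  have hk : (ramp δ s / 2) ^ (1 - θ) ≤ s ^ 2 / 6 :=
    calc (ramp δ s / 2) ^ (1 - θ) ≤ (δ * E) ^ (1 - θ) :=
          rpow_le_rpow (by linarith) (by rw [hramp]; nlinarith [mul_pos hδ0 hE0]) (by linarith)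
      _ = δ ^ (1 - θ) * E ^ (1 - θ) := mul_rpow hδ0.le hE0.le
      _ ≤ (1 - θ) ^ 2 / 12 * (2 * s ^ 2 / (1 - θ) ^ 2) :=
          mul_le_mul hδ (exp_neg_inv_rpow_le hs0 hθ1) (by positivity) (by positivity)
      _ = s ^ 2 / 6 := by field_simp [(by linarith : 1 - θ ≠ 0)]; ring
  calc δ * (E * (1 + s⁻¹)) ≤ ramp δ s / 2 / (s ^ 2 / 6) := by
        rw [hramp, div_div, le_div_iff₀ (by positivity)]
        field_simp
        nlinarith [mul_pos (mul_pos hδ0 hE0) hs0]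
    _ ≤ (ramp δ s / 2) ^ θ := div_le_rpow_of_rpow_one_sub_le (by linarith) (by positivity) hk
    _ ≤ (1 - exp (-ramp δ s)) ^ θ := rpow_le_rpow (by linarith) hx hθ0

lemma ramp_slope_le {θ : ℝ} (hθ0 : 0 ≤ θ) (hθ1 : θ < 1) (hδ0 : 0 < δ)
    (hδ : δ ^ (1 - θ) ≤ (1 - θ) ^ 2 / 12) (hs : 0 < s) :
    δ * (exp (-s⁻¹) * (1 + s⁻¹)) ≤ (1 - exp (-ramp δ s)) ^ θ := by
  rcases le_total s 1 with hs1 | hs1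
  · exact ramp_slope_le_of_le_one hθ0 hθ1 hδ0 hδ hs hs1
  · exact ramp_slope_le_of_one_le hθ0 hθ1 hδ0 hδ hs1

end Ramp

theorem statement12 (m β : ℝ) (hm : 2 < m) (hβ : β ∈ Set.Ioo (0:ℝ) 1) :
    ∃ M > (0:ℝ), ∃ ξ : ℝ → ℝ,
      ContDiff ℝ (⊤ : ℕ∞) ξ ∧
      (∀ s ≤ (0:ℝ), ξ s = s) ∧
      (∀ s > (0:ℝ), 0 < deriv ξ s ∧ deriv ξ s < 1 ∧ deriv (deriv ξ) s < 0) ∧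
      StrictMono ξ ∧
      Tendsto ξ atTop (𝓝 M) ∧
      (∀ s > (0:ℝ),
        ((m - 2) / m) *
          (-(deriv (deriv ξ) s) /
            (deriv ξ s - (deriv ξ s) ^ m) ^ (2 / m)) ^ (m / (m - 2))
          ≤ (1 - deriv ξ s) ^ β) := by
  obtain ⟨hβ0, hβ1⟩ := hβ
  have hm0 : 0 < m := by linarith
  set θ := (β * (m - 2) + 2) / m with hθ
  have hθ0 : 0 ≤ θ := div_nonneg (by nlinarith) hm0.le
  have hθ1 : θ < 1 := by rw [hθ, div_lt_one hm0]; nlinarith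
  set δ := ((1 - θ) ^ 2 / 12) ^ (1 - θ)⁻¹
  have hδ0 : 0 < δ := by positivity
  have hδ : δ ^ (1 - θ) = (1 - θ) ^ 2 / 12 := rpow_inv_rpow (by positivity) (by linarith)
  set p := fun s => exp (-ramp δ s)
  have hp : ContDiff ℝ (⊤ : ℕ∞) p := (contDiff_ramp δ).neg.exp
  have hp_lt_one : ∀ s > 0, p s < 1 := fun s hs =>
    exp_lt_one_iff.mpr (neg_neg_of_pos (ramp_pos hδ0 hs))
  set ξ := fun s => ∫ t in (0 : ℝ)..s, p t
  have hξ' : deriv ξ = p := funext (hp.continuous.deriv_integral p 0)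
  have hξ'' : ∀ s > 0, deriv (deriv ξ) s = -(δ * (exp (-s⁻¹) * (1 + s⁻¹))) * p s :=
    fun s hs => deriv_deriv_integral_exp_neg_ramp δ hs
  have hslope : ∀ s > 0, 0 < δ * (exp (-s⁻¹) * (1 + s⁻¹)) := fun s hs => by positivity
  have hmono : StrictMono ξ := strictMono_integral_zero_left hp.continuous fun s => exp_pos _
  have htend := intervalIntegral_tendsto_integral_Ioi 0 (integrableOn_exp_neg_ramp hδ0) tendsto_id
  refine ⟨_, ?_, ξ, contDiff_integral_zero_left hp,
    fun s => integral_zero_left_eq_self fun t ht => by simp [p, ramp_of_nonpos δ ht],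
    fun s hs => ?_, hmono, htend, fun s hs => ?_⟩
  · calc (0 : ℝ) = ξ 0 := intervalIntegral.integral_same.symm
      _ < ξ 1 := hmono one_pos
      _ ≤ _ := hmono.monotone.ge_of_tendsto htend 1
  · rw [hξ'' s hs, hξ']
    exact ⟨exp_pos _, hp_lt_one s hs,
      mul_neg_of_neg_of_pos (neg_neg_of_pos (hslope s hs)) (exp_pos _)⟩
  · rw [hξ'' s hs, hξ', neg_mul, neg_neg]
    exact mul_div_rpow_rpow_le_of_le_rpow hm (exp_pos _) (hp_lt_one s hs) (hslope s hs).le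
      (ramp_slope_le hθ0 hθ1 hδ0 hδ.le hs)
end
end
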